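/- Let r ≥ 1 and let d₁,…,d_r ≥ 1 be integers, set A = ℂ[x₁,…,x_r]/⟨x₁^{d₁},…,x_r^{d_r}⟩ and ρ = (d₁−1) + ⋯ + (d_r−1). Let f be a homogeneous polynomial of degree k and let i ≥ 0 be an integer with i + k ≤ ρ. Then the multiplication map ×f : A_i → A_{i+k} is injective if and only if the multiplication map ×f : A_{ρ−i−k} → A_{ρ−i} is surjective. -/

import Mathlib

open MvPolynomial

/-- The degree-`i` graded piece of the quotient algebra `R/I`, where
`R = ℂ[x₁,…,x_r]` is graded by total degree: the image of the space of
homogeneous polynomials of degree `i` under the quotient map. -/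
noncomputable def gradedPiece {r : ℕ} (I : Ideal (MvPolynomial (Fin r) ℂ)) (i : ℕ) :
    Submodule ℂ (MvPolynomial (Fin r) ℂ ⧸ I) :=
  (homogeneousSubmodule (Fin r) ℂ i).map (Ideal.Quotient.mkₐ ℂ I).toLinearMap

/-!
The monomials `x^α` with `α ≤ δ := (d_j - 1)_j` span `A`, and the top degree `ρ = |δ|` is spanned
by `x^δ`. The coefficient of `x^δ` is a functional `φ` on `A` for which `(u, v) ↦ φ (u v)` pairs
`A_a` perfectly with `A_b` whenever `a + b = ρ`: the monomials `x^α` and `x^(δ - α)` are dual bases.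
As `φ (f u · v) = φ (u · f v)`, multiplication by `f` from `A_i` to `A_{i+k}` is the transpose of
multiplication by `f` from `A_{ρ-i-k}` to `A_{ρ-i}`, and a linear map is injective iff its
transpose is surjective.
-/

theorem Finsupp.degree_tsub_of_le {σ : Type*} {α β : σ →₀ ℕ} (h : α ≤ β) :
    (β - α).degree = β.degree - α.degree := by
  have hsum := map_add Finsupp.degree (β - α) α
  rw [tsub_add_cancel_of_le h] at hsum
  omega

theorem MvPolynomial.IsHomogeneous.degree_eq_of_mem_support {σ R : Type*} [CommSemiring R]
    {p : MvPolynomial σ R} {n : ℕ} (hp : p.IsHomogeneous n) {α : σ →₀ ℕ}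
    (hα : α ∈ p.support) : α.degree = n := by
  rw [Finsupp.degree_eq_weight_one]
  exact hp (mem_support_iff.1 hα)

section Duality

variable {K A : Type*} [Field K] [CommRing A] [Algebra K A] (φ : A →ₗ[K] K)
  {U U' W W' : Submodule K A} {c : A}

theorem injOn_mul_left_of_surjOn
    (hnondeg : ∀ u ∈ U, (∀ w ∈ W', φ (u * w) = 0) → u = 0)
    (hc : Set.SurjOn (c * ·) W W') : Set.InjOn (c * ·) U := by
  intro x hx y hy hxy
  have hcxy : c * (x - y) = 0 := by rw [mul_sub, sub_eq_zero]; exact hxy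
  rw [← sub_eq_zero]
  refine hnondeg _ (U.sub_mem hx hy) fun w hw => ?_
  obtain ⟨v, -, rfl⟩ := hc hw
  rw [mul_left_comm, ← mul_assoc, hcxy, zero_mul, map_zero]

theorem surjOn_mul_left_of_injOn
    (hrepr : ∀ g : Module.Dual K A, ∃ u ∈ U, ∀ w ∈ W', φ (u * w) = g w)
    (hnondeg : ∀ u ∈ U', (∀ w ∈ W, φ (u * w) = 0) → u = 0)
    (hcU : Set.MapsTo (c * ·) U U') (hcW : Set.MapsTo (c * ·) W W')
    (hc : Set.InjOn (c * ·) U) : Set.SurjOn (c * ·) W W' := by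
  intro w hw
  by_contra hw'
  have hnot : w ∉ W.map (LinearMap.mulLeft K c) := fun ⟨v, hv, hvw⟩ => hw' ⟨v, hv, hvw⟩
  obtain ⟨g, hgw, hg⟩ := Submodule.exists_dual_map_eq_bot_of_notMem hnot inferInstance
  obtain ⟨u, hu, hφu⟩ := hrepr g
  have hcu : c * u = 0 := hnondeg _ (hcU hu) fun v hv => by
    rw [mul_comm c, mul_assoc, hφu (c * v) (hcW hv), ← Submodule.mem_bot K, ← hg]
    exact Submodule.mem_map_of_mem (Submodule.mem_map_of_mem hv)
  have hu0 : u = 0 := hc hu U.zero_mem (by simp only [hcu, mul_zero])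
  exact hgw (by rw [← hφu w hw, hu0, zero_mul, map_zero])

end Duality

section PurePowers

variable {σ R : Type*} [CommRing R] (d : σ → ℕ)

noncomputable def purePowerIdeal : Ideal (MvPolynomial σ R) :=
  Ideal.span (Set.range fun j => X j ^ d j)

variable {d}

theorem mem_purePowerIdeal_iff {p : MvPolynomial σ R} :
    p ∈ purePowerIdeal d ↔ ∀ α ∈ p.support, ∃ j, d j ≤ α j := by
  have hgen : (Set.range fun j => (X j : MvPolynomial σ R) ^ d j) =
      (fun α => monomial α 1) '' Set.range fun j => Finsupp.single j (d j) := by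
    rw [← Set.range_comp]
    simp only [Function.comp_def, X_pow_eq_monomial]
  simp only [purePowerIdeal, hgen, mem_ideal_span_monomial_image, Set.exists_range_iff,
    Finsupp.single_le_iff]

theorem monomial_mem_purePowerIdeal {α : σ →₀ ℕ} {j : σ} (h : d j ≤ α j) (a : R) :
    monomial α a ∈ purePowerIdeal d :=
  mem_purePowerIdeal_iff.2 fun _β hβ =>
    ⟨j, Finset.mem_singleton.1 (support_monomial_subset hβ) ▸ h⟩

variable [Finite σ]

variable (d) in
noncomputable def socleExponent : σ →₀ ℕ :=
  Finsupp.equivFunOnFinite.symm fun j => d j - 1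

theorem socleExponent_apply (j : σ) : socleExponent d j = d j - 1 := rfl

theorem le_socleExponent {α : σ →₀ ℕ} (h : ∀ j, α j < d j) : α ≤ socleExponent d :=
  fun j => Nat.le_sub_one_of_lt (h j)

theorem coeff_socleExponent_eq_zero (hd : ∀ j, 1 ≤ d j) {p : MvPolynomial σ R}
    (hp : p ∈ purePowerIdeal d) : coeff (socleExponent d) p = 0 := by
  by_contra h
  obtain ⟨j, hj⟩ := mem_purePowerIdeal_iff.1 hp _ (mem_support_iff.2 h)
  have := hd j
  rw [socleExponent_apply] at hj
  omega

noncomputable def socleCoeff (hd : ∀ j, 1 ≤ d j) :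
    (MvPolynomial σ R ⧸ purePowerIdeal d) →ₗ[R] R :=
  ((purePowerIdeal d).restrictScalars R).liftQ (lcoeff R (socleExponent d))
    fun _p hp => coeff_socleExponent_eq_zero hd hp

theorem socleCoeff_mk (hd : ∀ j, 1 ≤ d j) (p : MvPolynomial σ R) :
    socleCoeff hd (Ideal.Quotient.mk _ p) = coeff (socleExponent d) p := rfl

end PurePowers

section GradedPiece

variable {r : ℕ}

theorem mem_gradedPiece_iff {I : Ideal (MvPolynomial (Fin r) ℂ)} {a : ℕ}
    {u : MvPolynomial (Fin r) ℂ ⧸ I} :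
    u ∈ gradedPiece I a ↔ ∃ p, p.IsHomogeneous a ∧ Ideal.Quotient.mk I p = u := by
  simp only [gradedPiece, Submodule.mem_map, mem_homogeneousSubmodule,
    AlgHom.toLinearMap_apply, Ideal.Quotient.mkₐ_eq_mk]

theorem mk_mem_gradedPiece (I : Ideal (MvPolynomial (Fin r) ℂ)) {a : ℕ}
    {p : MvPolynomial (Fin r) ℂ} (hp : p.IsHomogeneous a) :
    Ideal.Quotient.mk I p ∈ gradedPiece I a :=
  mem_gradedPiece_iff.2 ⟨p, hp, rfl⟩

theorem mapsTo_mul_gradedPiece (I : Ideal (MvPolynomial (Fin r) ℂ))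
    {f : MvPolynomial (Fin r) ℂ} {k a b : ℕ} (hf : f.IsHomogeneous k) (hab : a + k = b) :
    Set.MapsTo (Ideal.Quotient.mk I f * ·) (gradedPiece I a) (gradedPiece I b) := by
  rintro _ hu
  obtain ⟨p, hp, rfl⟩ := mem_gradedPiece_iff.1 hu
  show Ideal.Quotient.mk I f * Ideal.Quotient.mk I p ∈ _
  rw [← map_mul]
  exact mk_mem_gradedPiece I (hab ▸ add_comm k a ▸ hf.mul hp)

variable {d : Fin r → ℕ}

theorem gradedPiece_purePowerIdeal_eq_span (a : ℕ) :
    gradedPiece (purePowerIdeal d) a = Submodule.span ℂ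
      ((fun α => Ideal.Quotient.mk _ (monomial α 1)) ''
        {α | α ≤ socleExponent d ∧ α.degree = a}) := by
  refine le_antisymm ?_ (Submodule.span_le.2 ?_)
  · intro u hu
    obtain ⟨p, hp, rfl⟩ := mem_gradedPiece_iff.1 hu
    rw [p.as_sum, map_sum]
    refine Submodule.sum_mem _ fun α hα => ?_
    by_cases hbig : ∃ j, d j ≤ α j
    · obtain ⟨j, hj⟩ := hbig
      rw [Ideal.Quotient.eq_zero_iff_mem.2 (monomial_mem_purePowerIdeal hj _)]
      exact Submodule.zero_mem _
    · push Not at hbig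
      rw [← mul_one (coeff α p), ← smul_eq_mul, ← smul_monomial,
        ← Ideal.Quotient.mkₐ_eq_mk ℂ, map_smul]
      exact Submodule.smul_mem _ _ (Submodule.subset_span
        ⟨α, ⟨le_socleExponent hbig, hp.degree_eq_of_mem_support hα⟩, rfl⟩)
  · rintro _ ⟨α, ⟨-, hα⟩, rfl⟩
    exact mk_mem_gradedPiece _ (isHomogeneous_monomial 1 hα)

variable (hd : ∀ j, 1 ≤ d j) {a b : ℕ} (hab : a + b = (socleExponent d).degree)
include hd hab

theorem eq_zero_of_forall_socleCoeff_mul_eq_zero {u : MvPolynomial (Fin r) ℂ ⧸ purePowerIdeal d}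
    (hu : u ∈ gradedPiece (purePowerIdeal d) a)
    (h : ∀ v ∈ gradedPiece (purePowerIdeal d) b, socleCoeff hd (u * v) = 0) : u = 0 := by
  obtain ⟨p, hp, rfl⟩ := mem_gradedPiece_iff.1 hu
  rw [Ideal.Quotient.eq_zero_iff_mem, mem_purePowerIdeal_iff]
  intro α hα
  by_contra! hsmall
  have hle := le_socleExponent hsmall
  have hdeg : (socleExponent d - α).degree = b := by
    rw [Finsupp.degree_tsub_of_le hle, hp.degree_eq_of_mem_support hα]
    omega
  have := h _ (mk_mem_gradedPiece _ (isHomogeneous_monomial 1 hdeg))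
  rw [← map_mul, socleCoeff_mk, coeff_mul_monomial', if_pos tsub_le_self,
    tsub_tsub_cancel_of_le hle, mul_one] at this
  exact mem_support_iff.1 hα this

theorem exists_mem_gradedPiece_socleCoeff_mul_eq
    (g : Module.Dual ℂ (MvPolynomial (Fin r) ℂ ⧸ purePowerIdeal d)) :
    ∃ u ∈ gradedPiece (purePowerIdeal d) a,
      ∀ v ∈ gradedPiece (purePowerIdeal d) b, socleCoeff hd (u * v) = g v := by
  classical
  let x : (Fin r →₀ ℕ) → MvPolynomial (Fin r) ℂ ⧸ purePowerIdeal d :=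
    fun α => Ideal.Quotient.mk _ (monomial α 1)
  let S := (Finset.Iic (socleExponent d)).filter (·.degree = a)
  refine ⟨∑ α ∈ S, g (x (socleExponent d - α)) • x α,
    Submodule.sum_mem _ fun α hα => Submodule.smul_mem _ _
      (mk_mem_gradedPiece _ (isHomogeneous_monomial 1 (Finset.mem_filter.1 hα).2)), ?_⟩
  intro v hv
  rw [gradedPiece_purePowerIdeal_eq_span] at hv
  refine LinearMap.eqOn_span (f := socleCoeff hd ∘ₗ LinearMap.mulLeft ℂ _) (g := g) ?_ hv
  rintro _ ⟨β, ⟨hβ, hβdeg⟩, rfl⟩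
  have hdual : socleExponent d - β ∈ S := by
    rw [Finset.mem_filter, Finset.mem_Iic, Finsupp.degree_tsub_of_le hβ]
    exact ⟨tsub_le_self, by omega⟩
  have hpair : ∀ α, socleCoeff hd (x α * x β) = if socleExponent d - β = α then 1 else 0 :=
    fun α => by
      rw [← map_mul, monomial_mul, one_mul, socleCoeff_mk, coeff_monomial]
      exact if_congr ((eq_tsub_iff_add_eq_of_le hβ).symm.trans eq_comm) rfl rfl
  change socleCoeff hd ((∑ α ∈ S, g (x (socleExponent d - α)) • x α) * x β) = g (x β)
  simp only [Finset.sum_mul, map_sum, smul_mul_assoc, map_smul, hpair, smul_eq_mul, mul_ite,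
    mul_one, mul_zero, Finset.sum_ite_eq, if_pos hdual, tsub_tsub_cancel_of_le hβ]

end GradedPiece

theorem injective_iff_surjective_dual_monomial_complete_intersection_general
    (r : ℕ) (d : Fin r → ℕ) (hd : ∀ i, 1 ≤ d i)
    (I : Ideal (MvPolynomial (Fin r) ℂ))
    (hI : I = Ideal.span (Set.range fun i => (X i : MvPolynomial (Fin r) ℂ) ^ d i))
    (ρ : ℕ) (hρ : ρ = ∑ i, (d i - 1))
    (f : MvPolynomial (Fin r) ℂ) (k : ℕ) (hf : f.IsHomogeneous k)
    (i : ℕ) (hik : i + k ≤ ρ) :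
    Set.InjOn (fun x => Ideal.Quotient.mk I f * x) (gradedPiece I i) ↔
    Set.SurjOn (fun x => Ideal.Quotient.mk I f * x) (gradedPiece I (ρ - i - k))
      (gradedPiece I (ρ - i)) := by
  obtain rfl : I = purePowerIdeal d := hI
  have hδ : (socleExponent d).degree = ρ := by
    simp only [Finsupp.degree_eq_sum, socleExponent_apply, hρ]
  constructor
  · exact surjOn_mul_left_of_injOn (socleCoeff hd)
      (exists_mem_gradedPiece_socleCoeff_mul_eq hd (a := i) (b := ρ - i) (by omega))
      (fun _ => eq_zero_of_forall_socleCoeff_mul_eq_zero hd (a := i + k) (b := ρ - i - k)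
        (by omega))
      (mapsTo_mul_gradedPiece _ hf rfl) (mapsTo_mul_gradedPiece _ hf (by omega))
  · exact injOn_mul_left_of_surjOn (socleCoeff hd)
      (fun _ => eq_zero_of_forall_socleCoeff_mul_eq_zero hd (b := ρ - i) (by omega))

/-- For `A = ℂ[x₁,…,x_r]/⟨x₁^{d₁},…,x_r^{d_r}⟩`, `ρ = Σ(dᵢ−1)`, `f` homogeneous of
degree `k` and `i + k ≤ ρ`: the multiplication map `×f : A_i → A_{i+k}` is injective
iff `×f : A_{ρ−i−k} → A_{ρ−i}` is surjective. -/
theorem injective_iff_surjective_dual_monomial_complete_intersection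
    (r : ℕ) (hr : 1 ≤ r) (d : Fin r → ℕ) (hd : ∀ i, 1 ≤ d i)
    (I : Ideal (MvPolynomial (Fin r) ℂ))
    (hI : I = Ideal.span (Set.range fun i => (X i : MvPolynomial (Fin r) ℂ) ^ d i))
    (ρ : ℕ) (hρ : ρ = ∑ i, (d i - 1))
    (f : MvPolynomial (Fin r) ℂ) (k : ℕ) (hf : f.IsHomogeneous k)
    (i : ℕ) (hik : i + k ≤ ρ) :
    Set.InjOn (fun x => Ideal.Quotient.mk I f * x) (gradedPiece I i) ↔
    Set.SurjOn (fun x => Ideal.Quotient.mk I f * x) (gradedPiece I (ρ - i - k))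
      (gradedPiece I (ρ - i)) :=
  injective_iff_surjective_dual_monomial_complete_intersection_general r d hd I hI ρ hρ f k hf i hik
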